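/- Let λ = 1 + √2 and define sinh_λ(x) = (λ^x - λ^{-x})/2. Let D = [[e·λ^{-z}, b],[b, e·λ^z]] be a symmetric positive definite matrix with e > 0, e² = b² + 1, and let R = (1/√2)·[[1, -1],[1, 1]]. Then the anti-diagonal entry of Rᵀ·D·R equals e·sinh_λ(z); consequently, if Δ = [[ε·λ^{-ζ}, β],[β, ε·λ^ζ]] with ε² = β² + 1, then (the skew) b'² + β'² of (Rᵀ D R, R•ᵀ Δ R•) equals (b² + 1)·sinh_λ²(z) + (β² + 1)·sinh_λ²(ζ), where R• = (1/√2)·[[-1, -1],[1, -1]]. -/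
import Mathlib


open Matrix

noncomputable def lam : ℝ := 1 + Real.sqrt 2

/-- Hyperbolic sine in base λ = 1 + √2. -/
noncomputable def sinhl (x : ℝ) : ℝ := (lam ^ x - lam ^ (-x)) / 2

/-- Action of the grid operator R on a state: the anti-diagonal entry of
    Rᵀ D R equals e·sinh_λ(z), and the skew of the transformed state equals
    (b²+1)sinh_λ²(z) + (β²+1)sinh_λ²(ζ). -/
theorem stmt15 (e b z ε β ζ : ℝ) (he : 0 < e) (he2 : e ^ 2 = b ^ 2 + 1)
    (hε : 0 < ε) (hε2 : ε ^ 2 = β ^ 2 + 1)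
    (D Δ R Rb : Matrix (Fin 2) (Fin 2) ℝ)
    (hD : D = !![e * lam ^ (-z), b; b, e * lam ^ z])
    (hΔ : Δ = !![ε * lam ^ (-ζ), β; β, ε * lam ^ ζ])
    (hR : R = (Real.sqrt 2)⁻¹ • !![(1 : ℝ), -1; 1, 1])
    (hRb : Rb = (Real.sqrt 2)⁻¹ • !![(-1 : ℝ), -1; 1, -1]) :
    (Rᵀ * D * R) 0 1 = e * sinhl z ∧
    ((Rᵀ * D * R) 0 1) ^ 2 + ((Rbᵀ * Δ * Rb) 0 1) ^ 2
      = (b ^ 2 + 1) * sinhl z ^ 2 + (β ^ 2 + 1) * sinhl ζ ^ 2 := by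
  have hs : (Real.sqrt 2)⁻¹ * (Real.sqrt 2)⁻¹ = 1 / 2 := by
    rw [← mul_inv]
    rw [← Real.sqrt_mul_self (by norm_num : (0:ℝ) ≤ 2)]
    norm_num
  subst hD hΔ hR hRb
  have h1 : ((((Real.sqrt 2)⁻¹ • !![(1 : ℝ), -1; 1, 1])ᵀ *
      !![e * lam ^ (-z), b; b, e * lam ^ z] *
      ((Real.sqrt 2)⁻¹ • !![(1 : ℝ), -1; 1, 1])) 0 1) = e * sinhl z := by
    simp [Matrix.mul_apply, Fin.sum_univ_succ, sinhl]
    linear_combination (e * (lam ^ z - lam ^ (-z))) * hs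
  have h2 : ((((Real.sqrt 2)⁻¹ • !![(-1 : ℝ), -1; 1, -1])ᵀ *
      !![ε * lam ^ (-ζ), β; β, ε * lam ^ ζ] *
      ((Real.sqrt 2)⁻¹ • !![(-1 : ℝ), -1; 1, -1])) 0 1) = -(ε * sinhl ζ) := by
    simp [Matrix.mul_apply, Fin.sum_univ_succ, sinhl]
    linear_combination (ε * (lam ^ (-ζ) - lam ^ ζ)) * hs
  refine ⟨h1, ?_⟩
  rw [h1, h2]
  nlinarith [he2, hε2]
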